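/- arXiv:2506.21725 — 4 statements merged into one kernel-verified Lean document; each statement's English description precedes it below -/
import Mathlib

section
/- Let (J,g) be a left- and Ad(T)-invariant Hermitian structure on a compact semisimple Lie group with g_q = (x_α). Then dd^cω(E_α, E_{−α}, E_β, E_{−β}) = −2g_t(H_α,H_β) − 2N_{α,β}²(x_{α+β} − x_α − x_β) − 2ε_{α−β}N_{α,−β}²(ε_{α−β}x_{α−β} − x_α + x_β) for all distinct α, β ∈ Δ⁺, where ε_γ = 1 if γ ∈ Δ⁺, −1 if γ ∈ −Δ⁺, and 0 if γ ∉ Δ. -/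
/-- For a left- and `Ad(T)`-invariant Hermitian structure `(J,g)` on a
compact semisimple Lie group, with `σ = d^cω` given by its components and `dd^cω`
computed by the Chevalley–Eilenberg formula,
`dd^cω(E_α,E_{-α},E_β,E_{-β}) = -2g_𝔱(H_α,H_β) - 2N_{α,β}²(x_{α+β}-x_α-x_β)
  - 2ε_{α-β}N_{α,-β}²(ε_{α-β}x_{α-β}-x_α+x_β)` for all distinct `α,β ∈ Δ⁺`,
where `ε_γ = 1` if `γ ∈ Δ⁺`, `-1` if `γ ∈ -Δ⁺`, and `0` otherwise. -/
theorem stmt_12 {L : Type*} [LieRing L] [Module ℂ L] [LieAlgebra ℂ L]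
    {V : Type*} [AddCommGroup V]
    (Δ Δp : Set V) (hΔ : Δ = Δp ∪ (-Δp)) (h0 : (0 : V) ∉ Δ)
    (hdisj : ∀ γ ∈ Δp, -γ ∉ Δp)
    (hord : ∀ α ∈ Δp, ∀ β ∈ Δp, -(α + β) ∉ Δp)
    (E H : V → L) (N : V → V → ℂ)
    (𝔱 : Submodule ℂ L)
    (ε : V → ℂ) (hεp : ∀ γ ∈ Δp, ε γ = 1) (hεm : ∀ γ, -γ ∈ Δp → ε γ = -1)
    (hε0 : ∀ γ, γ ∉ Δ → ε γ = 0) (hεneg : ∀ γ, ε (-γ) = -ε γ)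
    (x y : V → ℂ) (hxneg : ∀ γ, x (-γ) = x γ)
    (hy : ∀ γ, y γ = -Complex.I * ε γ * x γ)
    (gt : L → L → ℂ) (hgt_symm : ∀ A B : L, gt A B = gt B A)
    -- bracket relations
    (hbr_root : ∀ α ∈ Δ, ∀ β ∈ Δ, α + β ≠ 0 → ⁅E α, E β⁆ = N α β • E (α + β))
    (hbr_H : ∀ α ∈ Δ, ⁅E α, E (-α)⁆ = H α) (hH : ∀ α ∈ Δ, H α ∈ 𝔱)
    -- properties of the structure constants
    (hN0 : ∀ μ ν : V, μ + ν ∉ Δ → N μ ν = 0)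
    (hNanti : ∀ μ ν : V, N ν μ = -N μ ν)
    (hNneg : ∀ μ ν : V, N (-μ) (-ν) = -N μ ν)
    (hNcyc : ∀ μ ν ρ : V, μ + ν + ρ = 0 → N ν ρ = N μ ν ∧ N ρ μ = N μ ν)
    -- components of the 3-form σ = d^cω (Lemma dco)
    (σ : L → L → L → ℂ)
    (hσ_smul : ∀ (c : ℂ) (X Y Z : L), σ (c • X) Y Z = c * σ X Y Z)
    (hσroot : ∀ μ ∈ Δ, ∀ ν ∈ Δ, ∀ ρ ∈ Δ, μ + ν + ρ = 0 →
      σ (E μ) (E ν) (E ρ) = Complex.I * ε μ * ε ν * ε ρ * N μ ν * (y μ + y ν + y ρ))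
    (hσmixed : ∀ A ∈ 𝔱, ∀ μ ∈ Δ, σ A (E μ) (E (-μ)) = gt A (H μ)) :
    -- the Chevalley–Eilenberg differential of σ, evaluated at (E_α, E_{-α}, E_β, E_{-β})
    ∀ α ∈ Δp, ∀ β ∈ Δp, α ≠ β →
      (-σ ⁅E α, E (-α)⁆ (E β) (E (-β))
        + σ ⁅E α, E β⁆ (E (-α)) (E (-β))
        - σ ⁅E α, E (-β)⁆ (E (-α)) (E β)
        - σ ⁅E (-α), E β⁆ (E α) (E (-β))
        + σ ⁅E (-α), E (-β)⁆ (E α) (E β)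
        - σ ⁅E β, E (-β)⁆ (E α) (E (-α)))
      = -2 * gt (H α) (H β)
        - 2 * (N α β) ^ 2 * (x (α + β) - x α - x β)
        - 2 * ε (α - β) * (N α (-β)) ^ 2
            * (ε (α - β) * x (α - β) - x α + x β) := by
  intro α hα β hβ hne
  have hΔneg : ∀ γ ∈ Δ, -γ ∈ Δ := by
    intro γ hγ
    rw [hΔ] at hγ ⊢
    rcases hγ with h | h
    · right; simpa using h
    · left; simpa using h
  have hαΔ : α ∈ Δ := by rw [hΔ]; exact Or.inl hα
  have hβΔ : β ∈ Δ := by rw [hΔ]; exact Or.inl hβ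
  have hmαΔ : -α ∈ Δ := hΔneg α hαΔ
  have hmβΔ : -β ∈ Δ := hΔneg β hβΔ
  have hab0 : α + β ≠ 0 := by
    intro h
    exact hdisj α hα (by rw [neg_eq_of_add_eq_zero_right h]; exact hβ)
  have hsub0 : α - β ≠ 0 := sub_ne_zero.mpr hne
  have hεα : ε α = 1 := hεp α hα
  have hεβ : ε β = 1 := hεp β hβ
  have hεmα : ε (-α) = -1 := hεm (-α) (by simpa using hα)
  have hεmβ : ε (-β) = -1 := hεm (-β) (by simpa using hβ)
  have hspΔ : α + β ∈ Δ → α + β ∈ Δp := by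
    intro hs
    rw [hΔ] at hs
    rcases hs with h | h
    · exact h
    · exact absurd (by simpa using h) (hord α hα β hβ)
  have hd' : α - β ∈ Δ → (α - β ∈ Δp ∨ -(α - β) ∈ Δp) := by
    intro hd
    rw [hΔ] at hd
    rcases hd with h | h
    · exact Or.inl h
    · exact Or.inr (by simpa using h)
  have hNab : N (-α) β = -(N α (-β)) := by
    have := hNneg α (-β); rwa [neg_neg] at this
  have h1 : σ ⁅E α, E (-α)⁆ (E β) (E (-β)) = gt (H α) (H β) := by
    rw [hbr_H α hαΔ]; exact hσmixed (H α) (hH α hαΔ) β hβΔ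
  have h6 : σ ⁅E β, E (-β)⁆ (E α) (E (-α)) = gt (H α) (H β) := by
    rw [hbr_H β hβΔ, hσmixed (H β) (hH β hβΔ) α hαΔ, hgt_symm]
  have h2 : σ ⁅E α, E β⁆ (E (-α)) (E (-β))
      = -(N α β) ^ 2 * (x (α + β) - x α - x β) := by
    rw [hbr_root α hαΔ β hβΔ hab0, hσ_smul]
    by_cases hs : α + β ∈ Δ
    · have hsp : α + β ∈ Δp := hspΔ hs
      have hNc : N (α + β) (-α) = -(N α β) := by
        rw [(hNcyc (-α) (-β) (α + β) (by abel)).2]; exact hNneg α β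
      rw [hσroot (α + β) hs (-α) hmαΔ (-β) hmβΔ (by abel), hNc]
      simp only [hy]
      rw [hεp _ hsp, hεmα, hεmβ, hxneg α, hxneg β]
      linear_combination (N α β) ^ 2 * (x (α + β) - x α - x β) * Complex.I_sq
    · rw [hN0 α β hs]; ring
  have h5 : σ ⁅E (-α), E (-β)⁆ (E α) (E β)
      = -(N α β) ^ 2 * (x (α + β) - x α - x β) := by
    have hs0 : -α + -β ≠ 0 := by
      rw [← neg_add]; exact neg_ne_zero.mpr hab0
    rw [hbr_root (-α) hmαΔ (-β) hmβΔ hs0, hσ_smul,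
      show -α + -β = -(α + β) from by abel]
    by_cases hs : α + β ∈ Δ
    · have hsp : α + β ∈ Δp := hspΔ hs
      have hmd : -(α + β) ∈ Δ := hΔneg _ hs
      have hNc : N (-(α + β)) α = N α β := (hNcyc α β (-(α + β)) (by abel)).2
      rw [hσroot (-(α + β)) hmd α hαΔ β hβΔ (by abel), hNc, hNneg]
      simp only [hy]
      rw [hεm (-(α + β)) (by simpa using hsp), hεα, hεβ, hxneg (α + β)]
      linear_combination (N α β) ^ 2 * (x (α + β) - x α - x β) * Complex.I_sq
    · rw [hNneg, hN0 α β hs]; ring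
  have h3 : σ ⁅E α, E (-β)⁆ (E (-α)) (E β)
      = ε (α - β) * (N α (-β)) ^ 2 * (ε (α - β) * x (α - β) - x α + x β) := by
    have hs0 : α + -β ≠ 0 := by rw [← sub_eq_add_neg]; exact hsub0
    rw [hbr_root α hαΔ (-β) hmβΔ hs0, hσ_smul, ← sub_eq_add_neg]
    by_cases hd : α - β ∈ Δ
    · have hNc : N (α - β) (-α) = -(N α (-β)) := by
        rw [(hNcyc (-α) β (α - β) (by abel)).2]; exact hNab
      rw [hσroot (α - β) hd (-α) hmαΔ β hβΔ (by abel), hNc]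
      simp only [hy]
      rw [hεmα, hεβ, hxneg α]
      rcases hd' hd with hp | hm
      · rw [hεp _ hp]
        linear_combination (-(N α (-β)) ^ 2 * (x (α - β) - x α + x β)) * Complex.I_sq
      · rw [hεm _ hm]
        linear_combination (-(N α (-β)) ^ 2 * (x (α - β) + x α - x β)) * Complex.I_sq
    · rw [hN0 α (-β) (by rwa [← sub_eq_add_neg])]; ring
  have h4 : σ ⁅E (-α), E β⁆ (E α) (E (-β))
      = ε (α - β) * (N α (-β)) ^ 2 * (ε (α - β) * x (α - β) - x α + x β) := by
    have hs0 : -α + β ≠ 0 := by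
      rw [show -α + β = -(α - β) from by abel]; exact neg_ne_zero.mpr hsub0
    rw [hbr_root (-α) hmαΔ β hβΔ hs0, hσ_smul,
      show -α + β = -(α - β) from by abel]
    by_cases hd : α - β ∈ Δ
    · have hmd : -(α - β) ∈ Δ := hΔneg _ hd
      have hNc : N (-(α - β)) α = N α (-β) := (hNcyc α (-β) (-(α - β)) (by abel)).2
      rw [hNab, hσroot (-(α - β)) hmd α hαΔ (-β) hmβΔ (by abel), hNc]
      simp only [hy]
      rw [hεneg (α - β), hxneg (α - β), hεα, hεmβ, hxneg β]
      rcases hd' hd with hp | hm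
      · rw [hεp _ hp]
        linear_combination (-(N α (-β)) ^ 2 * (x (α - β) - x α + x β)) * Complex.I_sq
      · rw [hεm _ hm]
        linear_combination (-(N α (-β)) ^ 2 * (x (α - β) + x α - x β)) * Complex.I_sq
    · rw [hNab, hN0 α (-β) (by rwa [← sub_eq_add_neg])]; ring
  rw [h1, h2, h3, h4, h5, h6]
  ring
end

section
/- Let Δ⁺ be the positive roots of a simple root system and suppose x : Δ⁺ → ℝ satisfies x_{α+β} = x_α + x_β − 1 for all α,β,α+β ∈ Δ⁺ (extended by x_{−α}=x_α). Then for all α, β ∈ Δ⁺, γ, δ ∈ −Δ⁺ with α+β+γ+δ = 0 and all pairwise sums nonzero: N_{α,β}N_{γ,δ}(x_α+x_β+x_γ+x_δ−2x_{α+β}) − ε_{α+γ}N_{α,γ}N_{β,δ}(−x_α+x_β+x_γ−x_δ+2ε_{α+γ}x_{α+γ}) + ε_{α+δ}N_{α,δ}N_{β,γ}(−x_α+x_β−x_γ+x_δ+2ε_{α+δ}x_{α+δ}) = 0. -/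
/-- If `x_{α+β} = x_α + x_β - 1` on `Δ⁺` (extended by `x_{-γ} = x_γ`),
then for `α,β ∈ Δ⁺`, `γ,δ ∈ -Δ⁺` with `α+β+γ+δ = 0` and all pairwise sums nonzero,
the (skt2) combination of the structure constants `N` vanishes. -/
theorem stmt_13 {V : Type*} [AddCommGroup V]
    (Δp : Set V) (hdisj : ∀ γ ∈ Δp, -γ ∉ Δp)
    (hord : ∀ α ∈ Δp, ∀ β ∈ Δp, -(α + β) ∉ Δp)
    (ε : V → ℝ) (hεp : ∀ γ ∈ Δp, ε γ = 1) (hεm : ∀ γ, -γ ∈ Δp → ε γ = -1)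
    (hε0 : ∀ γ, γ ∉ Δp → -γ ∉ Δp → ε γ = 0)
    (N : V → V → ℝ)
    (hNneg : ∀ μ ν : V, N (-μ) (-ν) = -N μ ν)
    (hN0 : ∀ μ ν : V, μ + ν ∉ Δp → -(μ + ν) ∉ Δp → N μ ν = 0)
    (hN4 : ∀ μ ν ρ τ : V, μ + ν + ρ + τ = 0 →
      μ + ν ≠ 0 → μ + ρ ≠ 0 → μ + τ ≠ 0 →
      N μ ν * N ρ τ - N μ ρ * N ν τ + N μ τ * N ν ρ = 0)
    (x : V → ℝ) (hxneg : ∀ γ, x (-γ) = x γ)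
    (hadd : ∀ α ∈ Δp, ∀ β ∈ Δp, α + β ∈ Δp → x (α + β) = x α + x β - 1) :
    ∀ α ∈ Δp, ∀ β ∈ Δp, ∀ γ δ : V, -γ ∈ Δp → -δ ∈ Δp →
      α + β + γ + δ = 0 →
      α + β ≠ 0 → α + γ ≠ 0 → α + δ ≠ 0 → β + γ ≠ 0 → β + δ ≠ 0 → γ + δ ≠ 0 →
      N α β * N γ δ * (x α + x β + x γ + x δ - 2 * x (α + β))
        - ε (α + γ) * N α γ * N β δ
            * (-x α + x β + x γ - x δ + 2 * ε (α + γ) * x (α + γ))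
        + ε (α + δ) * N α δ * N β γ
            * (-x α + x β - x γ + x δ + 2 * ε (α + δ) * x (α + δ)) = 0 := by
  intro α hα β hβ γ δ hγ hδ hsum hab hag had hbg hbd hgd
  -- Term 1
  have h1 : N α β * N γ δ * (x α + x β + x γ + x δ - 2 * x (α + β))
      = 2 * (N α β * N γ δ) := by
    by_cases hz : N α β = 0
    · simp [hz]
    · have hmem : α + β ∈ Δp := by
        by_contra h
        exact hz (hN0 α β h (hord α hα β hβ))
      have e1 := hadd α hα β hβ hmem
      have egd : -γ + -δ = α + β := by
        linear_combination (norm := abel) -hsum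
      have e2 := hadd (-γ) hγ (-δ) hδ (by rw [egd]; exact hmem)
      rw [egd, hxneg, hxneg] at e2
      have : x α + x β + x γ + x δ - 2 * x (α + β) = 2 := by linarith
      rw [this]; ring
  -- Term 2
  have h2 : ε (α + γ) * N α γ * N β δ
      * (-x α + x β + x γ - x δ + 2 * ε (α + γ) * x (α + γ))
      = 2 * (N α γ * N β δ) := by
    by_cases hz : N α γ = 0
    · simp [hz]
    · by_cases hm : α + γ ∈ Δp
      · have hεv : ε (α + γ) = 1 := hεp _ hm
        have ea := hadd (α + γ) hm (-γ) hγ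
          (by rw [show α + γ + -γ = α by abel]; exact hα)
        rw [show α + γ + -γ = α by abel, hxneg] at ea
        have ed := hadd (α + γ) hm β hβ
          (by rw [show α + γ + β = -δ by linear_combination (norm := abel) hsum]; exact hδ)
        rw [show α + γ + β = -δ by linear_combination (norm := abel) hsum, hxneg] at ed
        rw [hεv]
        have : -x α + x β + x γ - x δ + 2 * 1 * x (α + γ) = 2 := by linarith
        rw [this]; ring
      · have hm' : -(α + γ) ∈ Δp := by
          by_contra h
          exact hz (hN0 α γ hm h)
        have hεv : ε (α + γ) = -1 := hεm _ hm'
        have ea := hadd (-(α + γ)) hm' α hα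
          (by rw [show -(α + γ) + α = -γ by abel]; exact hγ)
        rw [show -(α + γ) + α = -γ by abel, hxneg, hxneg] at ea
        have ed := hadd (-(α + γ)) hm' (-δ) hδ
          (by rw [show -(α + γ) + -δ = β by linear_combination (norm := abel) -hsum]; exact hβ)
        rw [show -(α + γ) + -δ = β by linear_combination (norm := abel) -hsum,
          hxneg, hxneg] at ed
        rw [hεv]
        have : -x α + x β + x γ - x δ + 2 * (-1) * x (α + γ) = -2 := by linarith
        rw [this]; ring
  -- Term 3
  have h3 : ε (α + δ) * N α δ * N β γ
      * (-x α + x β - x γ + x δ + 2 * ε (α + δ) * x (α + δ))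
      = 2 * (N α δ * N β γ) := by
    by_cases hz : N α δ = 0
    · simp [hz]
    · by_cases hm : α + δ ∈ Δp
      · have hεv : ε (α + δ) = 1 := hεp _ hm
        have ea := hadd (α + δ) hm (-δ) hδ
          (by rw [show α + δ + -δ = α by abel]; exact hα)
        rw [show α + δ + -δ = α by abel, hxneg] at ea
        have ed := hadd (α + δ) hm β hβ
          (by rw [show α + δ + β = -γ by linear_combination (norm := abel) hsum]; exact hγ)
        rw [show α + δ + β = -γ by linear_combination (norm := abel) hsum, hxneg] at ed
        rw [hεv]
        have : -x α + x β - x γ + x δ + 2 * 1 * x (α + δ) = 2 := by linarith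
        rw [this]; ring
      · have hm' : -(α + δ) ∈ Δp := by
          by_contra h
          exact hz (hN0 α δ hm h)
        have hεv : ε (α + δ) = -1 := hεm _ hm'
        have ea := hadd (-(α + δ)) hm' α hα
          (by rw [show -(α + δ) + α = -δ by abel]; exact hδ)
        rw [show -(α + δ) + α = -δ by abel, hxneg, hxneg] at ea
        have ed := hadd (-(α + δ)) hm' (-γ) hγ
          (by rw [show -(α + δ) + -γ = β by linear_combination (norm := abel) -hsum]; exact hβ)
        rw [show -(α + δ) + -γ = β by linear_combination (norm := abel) -hsum,
          hxneg, hxneg] at ed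
        rw [hεv]
        have : -x α + x β - x γ + x δ + 2 * (-1) * x (α + δ) = -2 := by linarith
        rw [this]; ring
  rw [h1, h2, h3]
  have key := hN4 α β γ δ hsum hab hag had
  linarith
end

section
/- Let Δ⁺ be the positive roots of a simple root system with simple roots α₁,…,αₙ, and let x_α := 1 + Σᵢ k^α_i(xᵢ − 1) with all x_α > 0. If Σ_{α∈Δ⁺}(1 − 1/x_α)·k^α_j = 0 for every j = 1,…,n, then x₁ = ⋯ = xₙ = 1 (and hence x_α = 1 for all α ∈ Δ⁺). -/
/-!
Pairing the equations with the vector `(xⱼ - 1)ⱼ` and using that `α ↦ x_α - 1` is linear in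
`(xⱼ - 1)ⱼ` gives `∑_α (1 - 1/x_α)(x_α - 1) = 0`. Every term equals `(x_α - 1)² / x_α ≥ 0`, so all
`x_α = 1`; at the simple roots `x_{αᵢ} = xᵢ`.
-/

open Finset

lemma one_sub_inv_mul_sub_one_eq_sq_div {x : ℝ} (hx : x ≠ 0) :
    (1 - x⁻¹) * (x - 1) = (x - 1) ^ 2 / x := by
  field_simp

lemma eq_one_of_sum_one_sub_inv_mul_sub_one_eq_zero {ι : Type*} {s : Finset ι} {X : ι → ℝ}
    (hX : ∀ α ∈ s, 0 < X α) (h : ∑ α ∈ s, (1 - (X α)⁻¹) * (X α - 1) = 0) :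
    ∀ α ∈ s, X α = 1 := by
  have hterm : ∀ α ∈ s, (1 - (X α)⁻¹) * (X α - 1) = (X α - 1) ^ 2 / X α := fun α hα =>
    one_sub_inv_mul_sub_one_eq_sq_div (hX α hα).ne'
  have hnonneg : ∀ α ∈ s, 0 ≤ (1 - (X α)⁻¹) * (X α - 1) := fun α hα => by
    rw [hterm α hα]
    exact div_nonneg (sq_nonneg _) (hX α hα).le
  intro α hα
  have hzero := (sum_eq_zero_iff_of_nonneg hnonneg).mp h α hα
  rw [hterm α hα, div_eq_zero_iff] at hzero
  rcases hzero with hsq | hX0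
  · exact sub_eq_zero.mp (pow_eq_zero_iff two_ne_zero |>.mp hsq)
  · exact absurd hX0 (hX α hα).ne'

lemma sum_mul_sum_eq_zero_of_forall_sum_mul_eq_zero {ι κ : Type*} [Fintype κ] {s : Finset ι}
    {c : ι → ℝ} {K : ι → κ → ℝ} (h : ∀ j, ∑ α ∈ s, c α * K α j = 0) (y : κ → ℝ) :
    ∑ α ∈ s, c α * ∑ j, K α j * y j = 0 :=
  calc ∑ α ∈ s, c α * ∑ j, K α j * y j = ∑ j, (∑ α ∈ s, c α * K α j) * y j := by
        simp only [mul_sum, sum_mul, mul_assoc]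
        exact sum_comm
    _ = 0 := by simp only [h, zero_mul, sum_const_zero]

theorem stmt_16_general {ι : Type*} (Δp : Finset ι) (n : ℕ) (k : ι → Fin n → ℕ)
    (e : Fin n → ι) (he : ∀ i, e i ∈ Δp)
    (hke : ∀ i j, k (e i) j = if j = i then 1 else 0)
    (xs : Fin n → ℝ)
    (hpos : ∀ α ∈ Δp, 0 < 1 + ∑ i, (k α i : ℝ) * (xs i - 1))
    (hcyt : ∀ j, (∑ α ∈ Δp,
      (1 - (1 + ∑ i, (k α i : ℝ) * (xs i - 1))⁻¹) * (k α j : ℝ)) = 0) :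
    (∀ i, xs i = 1) ∧ ∀ α ∈ Δp, 1 + ∑ i, (k α i : ℝ) * (xs i - 1) = 1 := by
  set X : ι → ℝ := fun α => 1 + ∑ i, (k α i : ℝ) * (xs i - 1) with hX
  have hpaired : ∑ α ∈ Δp, (1 - (X α)⁻¹) * (X α - 1) = 0 := by
    simpa only [hX, add_sub_cancel_left] using
      sum_mul_sum_eq_zero_of_forall_sum_mul_eq_zero hcyt (fun i => xs i - 1)
  have hXone := eq_one_of_sum_one_sub_inv_mul_sub_one_eq_zero hpos hpaired
  refine ⟨fun i => ?_, hXone⟩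
  have hsimple := hXone (e i) (he i)
  simp only [hke, Nat.cast_ite, Nat.cast_one, Nat.cast_zero, ite_mul, one_mul, zero_mul,
    sum_ite_eq', mem_univ, if_true] at hsimple
  linarith

/-- With `x_α = 1 + Σᵢ k^α_i (xᵢ - 1) > 0` for all positive roots, if
`Σ_{α∈Δ⁺} (1 - 1/x_α)·k^α_j = 0` for every `j`, then `x₁ = ⋯ = xₙ = 1` (hence
`x_α = 1` for all `α ∈ Δ⁺`). -/
theorem stmt_16 {ι : Type*} (Δp : Finset ι) (n : ℕ) (k : ι → Fin n → ℕ)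
    (e : Fin n → ι) (he : ∀ i, e i ∈ Δp) (heinj : Function.Injective e)
    (hke : ∀ i j, k (e i) j = if j = i then 1 else 0)
    (xs : Fin n → ℝ)
    (hpos : ∀ α ∈ Δp, 0 < 1 + ∑ i, (k α i : ℝ) * (xs i - 1))
    (hcyt : ∀ j, (∑ α ∈ Δp,
      (1 - (1 + ∑ i, (k α i : ℝ) * (xs i - 1))⁻¹) * (k α j : ℝ)) = 0) :
    (∀ i, xs i = 1) ∧ ∀ α ∈ Δp, 1 + ∑ i, (k α i : ℝ) * (xs i - 1) = 1 :=
  stmt_16_general Δp n k e he hke xs hpos hcyt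
end

section
/- Let Δ⁺ be the positive roots of a simple root system with Cartan-type matrix Q := [⟨αᵢ,αⱼ⟩] (positive definite) and F(X) := Σ_{α∈Δ⁺}(x_α − log x_α) with x_α = 1 + Σᵢ k^α_i(xᵢ−1), defined on the open set U where all x_α > 0. Then every maximal solution X(t) of the ODE X' = −Q·∇F(X) with X(0) ∈ U converges to (1,…,1) as t → ∞. -/
/-!
With `P = Q⁻¹`, the function `G(t) = (X - 1)ᵀ P (X - 1)` is a Lyapunov function for the flow:
`G' = -2 (X - 1)·∇F = -2 Σ_α (x_α - 1)² / x_α ≤ 0`. So `X` stays bounded, say `Xᵢ ≤ B`, and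
then the simple roots alone give `(X - 1)·∇F ≥ ‖X - 1‖² / B ≥ G / (Λ B)`, where `Λ` bounds `P`
on the unit sphere. By Grönwall `G` decays exponentially, hence so does `‖X - 1‖`.
-/

open Filter Matrix Real Set Topology

section NormEquivalence

variable {E : Type*} [NormedAddCommGroup E] [NormedSpace ℝ E] {q : E → ℝ}

lemma map_zero_of_sq_homogeneous (hsmul : ∀ (c : ℝ) v, q (c • v) = c ^ 2 * q v) : q 0 = 0 := by
  simpa using hsmul 0 0

lemma map_eq_norm_sq_mul_of_sq_homogeneous (hsmul : ∀ (c : ℝ) v, q (c • v) = c ^ 2 * q v)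
    {v : E} (hv : v ≠ 0) : q v = ‖v‖ ^ 2 * q (‖v‖⁻¹ • v) := by
  rw [hsmul, ← mul_assoc, ← mul_pow, mul_inv_cancel₀ (norm_ne_zero_iff.2 hv), one_pow, one_mul]

lemma exists_pos_mul_norm_sq_le [FiniteDimensional ℝ E] (hq : Continuous q)
    (hsmul : ∀ (c : ℝ) v, q (c • v) = c ^ 2 * q v) (hpos : ∀ v ≠ 0, 0 < q v) :
    ∃ μ > 0, ∀ v, μ * ‖v‖ ^ 2 ≤ q v := by
  rcases subsingleton_or_nontrivial E with hE | hE
  · exact ⟨1, one_pos, fun v => by simp [Subsingleton.elim v 0, map_zero_of_sq_homogeneous hsmul]⟩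
  obtain ⟨u, hu, hmin⟩ := (isCompact_sphere (0 : E) 1).exists_isMinOn
    (NormedSpace.sphere_nonempty.2 zero_le_one) hq.continuousOn
  refine ⟨q u, hpos u (ne_zero_of_mem_unit_sphere ⟨u, hu⟩), fun v => ?_⟩
  rcases eq_or_ne v 0 with rfl | hv
  · simp [map_zero_of_sq_homogeneous hsmul]
  rw [map_eq_norm_sq_mul_of_sq_homogeneous hsmul hv, mul_comm]
  exact mul_le_mul_of_nonneg_left
    (hmin (mem_sphere_zero_iff_norm.2 (norm_smul_inv_norm hv))) (sq_nonneg _)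

lemma exists_pos_le_mul_norm_sq [FiniteDimensional ℝ E] (hq : Continuous q)
    (hsmul : ∀ (c : ℝ) v, q (c • v) = c ^ 2 * q v) :
    ∃ Λ > 0, ∀ v, q v ≤ Λ * ‖v‖ ^ 2 := by
  rcases subsingleton_or_nontrivial E with hE | hE
  · exact ⟨1, one_pos, fun v => by simp [Subsingleton.elim v 0, map_zero_of_sq_homogeneous hsmul]⟩
  obtain ⟨u, hu, hmax⟩ := (isCompact_sphere (0 : E) 1).exists_isMaxOn
    (NormedSpace.sphere_nonempty.2 zero_le_one) hq.continuousOn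
  refine ⟨max (q u) 1, by positivity, fun v => ?_⟩
  rcases eq_or_ne v 0 with rfl | hv
  · simp [map_zero_of_sq_homogeneous hsmul]
  rw [map_eq_norm_sq_mul_of_sq_homogeneous hsmul hv, mul_comm]
  exact mul_le_mul_of_nonneg_right
    ((hmax (mem_sphere_zero_iff_norm.2 (norm_smul_inv_norm hv))).trans (le_max_left _ _))
    (sq_nonneg _)

end NormEquivalence

lemma dotProduct_mulVec_smul {m : Type*} [Fintype m] (A : Matrix m m ℝ) (c : ℝ) (v : m → ℝ) :
    c • v ⬝ᵥ A *ᵥ (c • v) = c ^ 2 * (v ⬝ᵥ A *ᵥ v) := by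
  simp only [mulVec_smul, smul_dotProduct, dotProduct_smul, smul_eq_mul]
  ring

lemma continuous_dotProduct_mulVec {m : Type*} [Fintype m] (A : Matrix m m ℝ) :
    Continuous fun v : m → ℝ => v ⬝ᵥ A *ᵥ v := by
  fun_prop

lemma pi_norm_sq_le_of_forall_sq_le {m : Type*} [Fintype m] {f : m → ℝ} {c : ℝ} (hc : 0 ≤ c)
    (h : ∀ i, f i ^ 2 ≤ c) : ‖f‖ ^ 2 ≤ c := by
  rw [← Real.le_sqrt (norm_nonneg _) hc, pi_norm_le_iff_of_nonneg (Real.sqrt_nonneg _)]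
  exact fun i => Real.abs_le_sqrt (h i)

lemma le_add_sqrt_of_pi_norm_sub_sq_le {m : Type*} [Fintype m] {v w : m → ℝ} {c : ℝ}
    (h : ‖v - w‖ ^ 2 ≤ c) (i : m) : v i ≤ w i + √c := by
  have := (le_abs_self _).trans ((norm_le_pi_norm (v - w) i).trans (Real.le_sqrt_of_sq_le h))
  rw [Pi.sub_apply] at this
  linarith

lemma le_mul_exp_of_hasDerivAt_le {f f' : ℝ → ℝ} {κ : ℝ}
    (hf : ∀ t ∈ Ici (0 : ℝ), HasDerivAt f (f' t) t) (hbound : ∀ t ∈ Ici (0 : ℝ), f' t ≤ -κ * f t)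
    {t : ℝ} (ht : 0 ≤ t) : f t ≤ f 0 * exp (-κ * t) := by
  have := le_gronwallBound_of_liminf_deriv_right_le (K := -κ) (ε := 0) (b := t)
    (fun s hs => (hf s hs.1).continuousAt.continuousWithinAt)
    (fun s hs r hr => (hf s hs.1).hasDerivWithinAt.liminf_right_slope_le hr) le_rfl
    (fun s hs => (add_zero (-κ * f s)).symm ▸ hbound s hs.1) t ⟨ht, le_rfl⟩
  simpa [gronwallBound_ε0] using this

lemma tendsto_of_norm_sub_sq_le_mul_exp {E : Type*} [NormedAddCommGroup E] {Y : ℝ → E} {y : E}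
    {C κ : ℝ} (hκ : 0 < κ) (h : ∀ᶠ t in atTop, ‖Y t - y‖ ^ 2 ≤ C * exp (-κ * t)) :
    Tendsto Y atTop (𝓝 y) := by
  rw [tendsto_iff_norm_sub_tendsto_zero]
  have hexp : Tendsto (fun t => C * exp (-κ * t)) atTop (𝓝 0) := by
    simpa using (tendsto_exp_atBot.comp ((tendsto_const_mul_atBot_of_neg (neg_lt_zero.2 hκ)).2
      tendsto_id)).const_mul C
  have hsqrt : Tendsto (fun t => √(C * exp (-κ * t))) atTop (𝓝 0) := by simpa using hexp.sqrt
  refine squeeze_zero' (Eventually.of_forall fun t => norm_nonneg _) ?_ hsqrt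
  filter_upwards [h] with t ht using Real.le_sqrt_of_sq_le ht

section Derivatives

variable {m : Type*} [Fintype m] {t : ℝ}

lemma hasDerivAt_dotProduct {u v : ℝ → m → ℝ} {u' v' : m → ℝ}
    (hu : HasDerivAt u u' t) (hv : HasDerivAt v v' t) :
    HasDerivAt (fun s => u s ⬝ᵥ v s) (u' ⬝ᵥ v t + u t ⬝ᵥ v') t := by
  have := HasDerivAt.fun_sum (u := Finset.univ) fun i _ =>
    (hasDerivAt_pi.1 hu i).fun_mul (hasDerivAt_pi.1 hv i)
  simpa [dotProduct, Finset.sum_add_distrib] using this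

lemma hasDerivAt_mulVec {l : Type*} (A : Matrix l m ℝ) {v : ℝ → m → ℝ} {v' : m → ℝ}
    (hv : HasDerivAt v v' t) : HasDerivAt (fun s => A *ᵥ v s) (A *ᵥ v') t :=
  hasDerivAt_pi.2 fun i =>
    (hasDerivAt_dotProduct (hasDerivAt_const t (A i)) hv).congr_deriv (by simp [mulVec])

lemma Matrix.IsSymm.hasDerivAt_dotProduct_mulVec {A : Matrix m m ℝ} (hA : A.IsSymm)
    {v : ℝ → m → ℝ} {v' : m → ℝ} (hv : HasDerivAt v v' t) :
    HasDerivAt (fun s => v s ⬝ᵥ A *ᵥ v s) (2 * (v t ⬝ᵥ A *ᵥ v')) t := by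
  convert hasDerivAt_dotProduct hv (hasDerivAt_mulVec A hv) using 1
  rw [dotProduct_mulVec, dotProduct_comm, ← mulVec_transpose, hA.eq]
  ring

lemma Matrix.PosDef.hasDerivAt_dotProduct_inv_mulVec [DecidableEq m] {Q : Matrix m m ℝ}
    (hQ : Q.PosDef) {X : ℝ → m → ℝ} {g c : m → ℝ} (hX : HasDerivAt X (-(Q *ᵥ g)) t) :
    HasDerivAt (fun s => (X s - c) ⬝ᵥ Q⁻¹ *ᵥ (X s - c)) (-2 * ((X t - c) ⬝ᵥ g)) t := by
  have hsymm : Q⁻¹.IsSymm := isHermitian_iff_isSymm.1 hQ.inv.isHermitian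
  convert hsymm.hasDerivAt_dotProduct_mulVec (hX.sub_const c) using 1
  rw [mulVec_neg, mulVec_mulVec, nonsing_inv_mul _ ((isUnit_iff_isUnit_det _).1 hQ.isUnit),
    one_mulVec, dotProduct_neg]
  ring

end Derivatives

section RootCoordinates

variable {ι : Type*} {n : ℕ} {Δp : Finset ι} {k : ι → Fin n → ℕ} {X : Fin n → ℝ}

/-- The paper's `x_α`. -/
def rootCoord (k : ι → Fin n → ℕ) (X : Fin n → ℝ) (α : ι) : ℝ :=
  1 + ∑ i, (k α i : ℝ) * (X i - 1)

/-- `∇F` for `F = Σ_{α ∈ Δ⁺} (x_α - log x_α)`. -/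
noncomputable def gradF (Δp : Finset ι) (k : ι → Fin n → ℕ) (X : Fin n → ℝ) : Fin n → ℝ :=
  fun j => ∑ α ∈ Δp, (k α j : ℝ) * (1 - (rootCoord k X α)⁻¹)

lemma rootCoord_of_eq_single {α : ι} {i : Fin n} (hk : ∀ j, k α j = if j = i then 1 else 0)
    (X : Fin n → ℝ) : rootCoord k X α = X i := by
  simp [rootCoord, hk]

lemma sub_one_dotProduct_gradF (hx : ∀ α ∈ Δp, rootCoord k X α ≠ 0) :
    (X - 1) ⬝ᵥ gradF Δp k X = ∑ α ∈ Δp, (rootCoord k X α - 1) ^ 2 / rootCoord k X α := by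
  simp only [dotProduct, gradF, Finset.mul_sum]
  rw [Finset.sum_comm]
  refine Finset.sum_congr rfl fun α hα => ?_
  have hsum : ∑ j, (X - 1) j * ((k α j : ℝ) * (1 - (rootCoord k X α)⁻¹))
      = (rootCoord k X α - 1) * (1 - (rootCoord k X α)⁻¹) := by
    simp only [rootCoord, add_sub_cancel_left, Finset.sum_mul, Pi.sub_apply, Pi.one_apply]
    exact Finset.sum_congr rfl fun j _ => by ring
  rw [hsum]
  field_simp [hx α hα]

lemma sub_one_dotProduct_gradF_nonneg (hx : ∀ α ∈ Δp, 0 < rootCoord k X α) :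
    0 ≤ (X - 1) ⬝ᵥ gradF Δp k X := by
  rw [sub_one_dotProduct_gradF fun α hα => (hx α hα).ne']
  exact Finset.sum_nonneg fun α hα => div_nonneg (sq_nonneg _) (hx α hα).le

lemma sq_sub_one_le_mul_sub_one_dotProduct_gradF {α : ι} {i : Fin n} {B : ℝ} (hα : α ∈ Δp)
    (hk : ∀ j, k α j = if j = i then 1 else 0) (hx : ∀ α ∈ Δp, 0 < rootCoord k X α)
    (hB : X i ≤ B) : (X i - 1) ^ 2 ≤ B * ((X - 1) ⬝ᵥ gradF Δp k X) := by
  have hXi : 0 < X i := rootCoord_of_eq_single hk X ▸ hx α hα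
  have hterm : (X i - 1) ^ 2 / X i ≤ (X - 1) ⬝ᵥ gradF Δp k X := by
    rw [sub_one_dotProduct_gradF fun β hβ => (hx β hβ).ne', ← rootCoord_of_eq_single hk X]
    exact Finset.single_le_sum (f := fun β => (rootCoord k X β - 1) ^ 2 / rootCoord k X β)
      (fun β hβ => div_nonneg (sq_nonneg _) (hx β hβ).le) hα
  calc (X i - 1) ^ 2 = X i * ((X i - 1) ^ 2 / X i) := by field_simp
    _ ≤ B * ((X - 1) ⬝ᵥ gradF Δp k X) :=
      mul_le_mul hB hterm (div_nonneg (sq_nonneg _) hXi.le) (hXi.le.trans hB)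

lemma norm_sub_one_sq_le_mul_sub_one_dotProduct_gradF {e : Fin n → ι} {B : ℝ}
    (he : ∀ i, e i ∈ Δp) (hke : ∀ i j, k (e i) j = if j = i then 1 else 0)
    (hx : ∀ α ∈ Δp, 0 < rootCoord k X α) (hB : ∀ i, X i ≤ B) (hB₀ : 0 ≤ B) :
    ‖X - 1‖ ^ 2 ≤ B * ((X - 1) ⬝ᵥ gradF Δp k X) :=
  pi_norm_sq_le_of_forall_sq_le (mul_nonneg hB₀ (sub_one_dotProduct_gradF_nonneg hx)) fun i =>
    sq_sub_one_le_mul_sub_one_dotProduct_gradF (he i) (hke i) hx (hB i)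

end RootCoordinates

theorem stmt_17_general {ι : Type*} (Δp : Finset ι) (n : ℕ) (k : ι → Fin n → ℕ)
    (e : Fin n → ι) (he : ∀ i, e i ∈ Δp)
    (hke : ∀ i j, k (e i) j = if j = i then 1 else 0)
    (Q : Matrix (Fin n) (Fin n) ℝ) (hQ : Q.PosDef)
    (X : ℝ → (Fin n → ℝ))
    (hXU : ∀ t ∈ Set.Ici (0 : ℝ), ∀ α ∈ Δp,
      0 < 1 + ∑ i, (k α i : ℝ) * (X t i - 1))
    (hX : ∀ t ∈ Set.Ici (0 : ℝ), HasDerivAt X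
      (-(Q.mulVec (fun j => ∑ α ∈ Δp,
        (k α j : ℝ) * (1 - (1 + ∑ i, (k α i : ℝ) * (X t i - 1))⁻¹)))) t) :
    Filter.Tendsto X Filter.atTop (nhds fun _ => 1) := by
  set G := fun t => (X t - 1) ⬝ᵥ Q⁻¹ *ᵥ (X t - 1)
  have hG (t) (ht : t ∈ Ici (0 : ℝ)) : HasDerivAt G (-2 * ((X t - 1) ⬝ᵥ gradF Δp k (X t))) t :=
    hQ.hasDerivAt_dotProduct_inv_mulVec (hX t ht)
  obtain ⟨μ, hμ, hlow⟩ := exists_pos_mul_norm_sq_le (continuous_dotProduct_mulVec Q⁻¹)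
    (dotProduct_mulVec_smul Q⁻¹) fun v hv => hQ.inv.dotProduct_mulVec_pos hv
  obtain ⟨Λ, hΛ, hupp⟩ := exists_pos_le_mul_norm_sq (continuous_dotProduct_mulVec Q⁻¹)
    (dotProduct_mulVec_smul Q⁻¹)
  have hnorm (t) : ‖X t - 1‖ ^ 2 ≤ G t / μ := (le_div_iff₀' hμ).2 (hlow _)
  have hGle (t) (ht : t ∈ Ici (0 : ℝ)) : G t ≤ G 0 := by
    simpa using le_mul_exp_of_hasDerivAt_le (κ := 0) hG
      (fun s hs => by simpa using sub_one_dotProduct_gradF_nonneg (hXU s hs)) ht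
  set B := 1 + √(G 0 / μ)
  have hXB (t) (ht : t ∈ Ici (0 : ℝ)) (i) : X t i ≤ B :=
    le_add_sqrt_of_pi_norm_sub_sq_le ((hnorm t).trans (by gcongr; exact hGle t ht)) i
  have hdecay (t) (ht : t ∈ Ici (0 : ℝ)) :
      -2 * ((X t - 1) ⬝ᵥ gradF Δp k (X t)) ≤ -(2 / (Λ * B)) * G t := by
    have hGd : G t ≤ Λ * B * ((X t - 1) ⬝ᵥ gradF Δp k (X t)) := (hupp _).trans <| by
      rw [mul_assoc]
      gcongr
      exact norm_sub_one_sq_le_mul_sub_one_dotProduct_gradF he hke (hXU t ht) (hXB t ht)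
        (by positivity)
    rw [neg_mul, neg_mul, neg_le_neg_iff, div_mul_eq_mul_div, div_le_iff₀ (by positivity)]
    linarith
  refine tendsto_of_norm_sub_sq_le_mul_exp (C := G 0 / μ) (by positivity : 0 < 2 / (Λ * B)) ?_
  filter_upwards [eventually_ge_atTop 0] with t ht
  calc ‖X t - 1‖ ^ 2 ≤ G t / μ := hnorm t
    _ ≤ G 0 * exp (-(2 / (Λ * B)) * t) / μ := by
      gcongr
      exact le_mul_exp_of_hasDerivAt_le hG hdecay ht
    _ = G 0 / μ * exp (-(2 / (Λ * B)) * t) := by ring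

/-- Every (globally defined, maximal) solution of the pluriclosed-flow
ODE `X' = -Q·∇F(X)` staying in the region `U = {X : x_α(X) > 0 for all α ∈ Δ⁺}`,
where `F(X) = Σ_{α∈Δ⁺}(x_α - log x_α)`, `x_α = 1 + Σᵢ k^α_i(xᵢ - 1)`, and `Q` is the
positive definite matrix `[⟨αᵢ,αⱼ⟩]`, converges to `(1,…,1)` as `t → ∞`. -/
theorem stmt_17 {ι : Type*} (Δp : Finset ι) (n : ℕ) (k : ι → Fin n → ℕ)
    (e : Fin n → ι) (he : ∀ i, e i ∈ Δp) (heinj : Function.Injective e)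
    (hke : ∀ i j, k (e i) j = if j = i then 1 else 0)
    (Q : Matrix (Fin n) (Fin n) ℝ) (hQ : Q.PosDef)
    (X : ℝ → (Fin n → ℝ))
    (hXU : ∀ t ∈ Set.Ici (0 : ℝ), ∀ α ∈ Δp,
      0 < 1 + ∑ i, (k α i : ℝ) * (X t i - 1))
    (hX : ∀ t ∈ Set.Ici (0 : ℝ), HasDerivAt X
      (-(Q.mulVec (fun j => ∑ α ∈ Δp,
        (k α j : ℝ) * (1 - (1 + ∑ i, (k α i : ℝ) * (X t i - 1))⁻¹)))) t) :
    Filter.Tendsto X Filter.atTop (nhds fun _ => 1) :=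
  stmt_17_general Δp n k e he hke Q hQ X hXU hX
end
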